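/- Cutoff lemma: For any PIIS T, any ACTL*K_{-X}^{[k]} formula φ (referring only to agents 1,…,k), and any n ≥ k: T(n) ⊨ φ if and only if T(k) ⊨ φ. -/
import Mathlib


-- State and path formulas of ACTL*K without next, in negation normal form,
-- with atoms and epistemic modalities indexed by agents in `A`.
mutual
inductive SForm (AP A : Type) : Type where
  | atom : AP → A → SForm AP A
  | natom : AP → A → SForm AP A
  | sand : SForm AP A → SForm AP A → SForm AP A
  | sor : SForm AP A → SForm AP A → SForm AP A
  | know : A → SForm AP A → SForm AP A
  | aall : PForm AP A → SForm AP A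

inductive PForm (AP A : Type) : Type where
  | ofState : SForm AP A → PForm AP A
  | pand : PForm AP A → PForm AP A → PForm AP A
  | por : PForm AP A → PForm AP A → PForm AP A
  | puntil : PForm AP A → PForm AP A → PForm AP A
  | prelease : PForm AP A → PForm AP A → PForm AP A
end

-- Renaming of agent indices in a formula.
mutual
def renameS {AP A B : Type} (f : A → B) : SForm AP A → SForm AP B
  | .atom p i => .atom p (f i)
  | .natom p i => .natom p (f i)
  | .sand φ ψ => .sand (renameS f φ) (renameS f ψ)
  | .sor φ ψ => .sor (renameS f φ) (renameS f ψ)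
  | .know i φ => .know (f i) (renameS f φ)
  | .aall φ => .aall (renameP f φ)

def renameP {AP A B : Type} (f : A → B) : PForm AP A → PForm AP B
  | .ofState φ => .ofState (renameS f φ)
  | .pand φ ψ => .pand (renameP f φ) (renameP f ψ)
  | .por φ ψ => .por (renameP f φ) (renameP f ψ)
  | .puntil φ ψ => .puntil (renameP f φ) (renameP f ψ)
  | .prelease φ ψ => .prelease (renameP f φ) (renameP f ψ)
end

/-- A model: global states, a transition relation, an initial state,
epistemic indistinguishability relations, and an indexed valuation. -/
structure Model (AP A : Type) where
  G : Type
  R : G → G → Prop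
  init : G
  eqv : A → G → G → Prop
  val : G → AP → A → Prop

def Model.ValidPath {AP A : Type} (M : Model AP A) (π : ℕ → M.G) : Prop :=
  ∀ j, M.R (π j) (π (j + 1))

def shiftPath {G : Type} (π : ℕ → G) (i : ℕ) : ℕ → G := fun j => π (i + j)

-- Satisfaction of state formulas at states and of path formulas on paths.
mutual
def ssat {AP A : Type} (M : Model AP A) : SForm AP A → M.G → Prop
  | .atom p i, g => M.val g p i
  | .natom p i, g => ¬ M.val g p i
  | .sand φ ψ, g => ssat M φ g ∧ ssat M ψ g
  | .sor φ ψ, g => ssat M φ g ∨ ssat M ψ g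
  | .know i φ, g => ∀ g', M.eqv i g g' → ssat M φ g'
  | .aall φ, g => ∀ π, M.ValidPath π → π 0 = g → psat M φ π

def psat {AP A : Type} (M : Model AP A) : PForm AP A → (ℕ → M.G) → Prop
  | .ofState φ, π => ssat M φ (π 0)
  | .pand φ ψ, π => psat M φ π ∧ psat M ψ π
  | .por φ ψ, π => psat M φ π ∨ psat M ψ π
  | .puntil φ ψ, π => ∃ i, psat M ψ (shiftPath π i) ∧ ∀ j < i, psat M φ (shiftPath π j)
  | .prelease φ ψ, π => ∀ i, (∀ j < i, ¬ psat M φ (shiftPath π j)) → psat M ψ (shiftPath π i)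
end

/-- A template agent: template states, initial state, synchronous and
asynchronous template actions (the silent action is treated separately),
protocol, deterministic evolution function, and labeling. -/
structure Template (AP : Type) where
  L : Type
  init : L
  SAct : Type
  AAct : Type
  protS : L → SAct → Prop
  protA : L → AAct → Prop
  tS : L → SAct → L
  tA : L → AAct → L
  lab : L → AP → Prop

/-- Global states of the instance `T(n)`: a template state per agent. -/
def GState {AP : Type} (T : Template AP) (n : ℕ) : Type := Fin n → T.L

/-- Concrete actions of `T(n)`: synchronous actions (shared by all agents),
asynchronous actions indexed by the unique agent performing them, and the
(joint) silent action. -/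
inductive CAct {AP : Type} (T : Template AP) (n : ℕ) : Type where
  | sync : T.SAct → CAct T n
  | async : T.AAct → Fin n → CAct T n
  | eps : CAct T n

/-- The global interleaved transition relation of `T(n)`: a synchronous
action is performed by all agents simultaneously, an asynchronous action by
exactly one agent (all others keep their state), and the silent action
leaves the global state unchanged. -/
def GTrans {AP : Type} (T : Template AP) (n : ℕ) :
    CAct T n → GState T n → GState T n → Prop
  | .sync s, g, g' => ∀ i, T.protS (g i) s ∧ g' i = T.tS (g i) s
  | .async b i, g, g' =>
      T.protA (g i) b ∧ g' i = T.tA (g i) b ∧ ∀ j, j ≠ i → g' j = g j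
  | .eps, g, g' => g' = g

/-- The initial global state of `T(n)`. -/
def GInit {AP : Type} (T : Template AP) (n : ℕ) : GState T n := fun _ => T.init

/-- Reachability from the initial state of `T(n)`. -/
def GReach {AP : Type} (T : Template AP) (n : ℕ) (g : GState T n) : Prop :=
  Relation.ReflTransGen (fun x y => ∃ a, GTrans T n a x y) (GInit T n) g

/-- The instance `T(n)` as a model: epistemic relations are given by equality
of the local component over the (reachable) global states, and atoms `p_i`
hold according to the template labeling of agent `i`'s local state. -/
def PIISModel {AP : Type} (T : Template AP) (n : ℕ) : Model AP (Fin n) where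
  G := GState T n
  R := fun g g' => ∃ a, GTrans T n a g g'
  init := GInit T n
  eqv := fun i g g' => GReach T n g' ∧ g i = g' i
  val := fun g p i => T.lab (g i) p

/-- `T(n) ⊨ φ`: satisfaction at the initial state. -/
def PIISsat {AP : Type} (T : Template AP) (n : ℕ) (φ : SForm AP (Fin n)) : Prop :=
  ssat (PIISModel T n) φ (PIISModel T n).init

-- ======== generic auxiliary machinery ========

theorem shiftPath_zero {G : Type} (π : ℕ → G) : shiftPath π 0 = π :=
  funext fun j => by simp [shiftPath]

theorem shiftPath_shiftPath {G : Type} (π : ℕ → G) (a b : ℕ) :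
    shiftPath (shiftPath π a) b = shiftPath π (a + b) :=
  funext fun j => congrArg π (by omega)

def StepF (f : ℕ → ℕ) : Prop := ∀ m, f (m+1) = f m ∨ f (m+1) = f m + 1
def UnbF (f : ℕ → ℕ) : Prop := ∀ c, ∃ m, c ≤ f m

theorem StepF.mono {f : ℕ → ℕ} (hf : StepF f) : Monotone f :=
  monotone_nat_of_le_succ fun n => by rcases hf n with h | h <;> omega

theorem StepF.hit {f : ℕ → ℕ} (hf : StepF f) (hub : UnbF f) {c : ℕ} (hc : f 0 ≤ c) :
    ∃ m, f m = c ∧ ∀ j < m, f j < c := by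
  have hP : ∃ m, c ≤ f m := hub c
  refine ⟨Nat.find hP, ?_, fun j hj => ?_⟩
  · have h1 : c ≤ f (Nat.find hP) := Nat.find_spec hP
    cases hm : Nat.find hP with
    | zero => rw [hm] at h1; omega
    | succ m' =>
      have h2 : ¬ c ≤ f m' := Nat.find_min hP (by omega)
      rcases hf m' with h3 | h3 <;> rw [hm] at h1 <;> omega
  · have := Nat.find_min hP hj; omega

theorem StepF.shift {f : ℕ → ℕ} (hf : StepF f) (j : ℕ) : StepF (fun t => f (j + t)) :=
  fun m => hf (j + m)

theorem UnbF.shift {f : ℕ → ℕ} (hf : StepF f) (hub : UnbF f) (j : ℕ) :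
    UnbF (fun t => f (j + t)) := fun c => by
  obtain ⟨m, hm⟩ := hub c
  exact ⟨m, le_trans hm (hf.mono (Nat.le_add_left m j))⟩

theorem psat_stutter {AP A : Type} (M : Model AP A) :
    ∀ (φ : PForm AP A) (π : ℕ → M.G) (f : ℕ → ℕ), StepF f → UnbF f →
      (psat M φ (fun m => π (f m)) ↔ psat M φ (shiftPath π (f 0)))
  | .ofState φ, π, f, _, _ => by
      simp only [psat]
      constructor <;> intro h <;> simpa [shiftPath] using h
  | .pand φ ψ, π, f, hs, hu => by
      simp only [psat]
      exact and_congr (psat_stutter M φ π f hs hu) (psat_stutter M ψ π f hs hu)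
  | .por φ ψ, π, f, hs, hu => by
      simp only [psat]
      exact or_congr (psat_stutter M φ π f hs hu) (psat_stutter M ψ π f hs hu)
  | .puntil φ ψ, π, f, hs, hu => by
      simp only [psat]
      constructor
      · rintro ⟨m, h2, h1⟩
        refine ⟨f m - f 0, ?_, ?_⟩
        · rw [shiftPath_shiftPath]
          have hfm : f 0 ≤ f m := hs.mono (Nat.zero_le m)
          have heq : f 0 + (f m - f 0) = f m := by omega
          rw [heq]
          have := (psat_stutter M ψ π (fun t => f (m + t)) (hs.shift m) (hu.shift hs m)).mp
          simp only [Nat.add_zero] at this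
          exact this h2
        · intro j' hj'
          rw [shiftPath_shiftPath]
          have hj'2 : f 0 ≤ f 0 + j' := Nat.le_add_right _ _
          obtain ⟨j, hje, hjlt⟩ := hs.hit hu hj'2
          have hjm : j < m := by
            by_contra hc
            have : f m ≤ f j := hs.mono (by omega)
            omega
          have := (psat_stutter M φ π (fun t => f (j + t)) (hs.shift j) (hu.shift hs j)).mp (h1 j hjm)
          simp only [Nat.add_zero] at this
          rwa [hje] at this
      · rintro ⟨i, h2, h1⟩
        obtain ⟨m, hme, hmlt⟩ := hs.hit hu (Nat.le_add_right (f 0) i)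
        refine ⟨m, ?_, ?_⟩
        · have := (psat_stutter M ψ π (fun t => f (m + t)) (hs.shift m) (hu.shift hs m)).mpr
          simp only [Nat.add_zero] at this
          apply this
          rw [hme, ← shiftPath_shiftPath]
          exact h2
        · intro j hj
          have hfj : f 0 ≤ f j := hs.mono (Nat.zero_le j)
          have hfjlt : f j < f 0 + i := by have := hmlt j hj; omega
          have := (psat_stutter M φ π (fun t => f (j + t)) (hs.shift j) (hu.shift hs j)).mpr
          simp only [Nat.add_zero] at this
          apply this
          have h1' := h1 (f j - f 0) (by omega)
          rw [shiftPath_shiftPath] at h1'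
          have : f 0 + (f j - f 0) = f j := by omega
          rwa [this] at h1'
  | .prelease φ ψ, π, f, hs, hu => by
      simp only [psat]
      constructor
      · intro H i hp
        obtain ⟨m, hme, hmlt⟩ := hs.hit hu (Nat.le_add_right (f 0) i)
        have hP : ∀ j < m, ¬ psat M φ (shiftPath (fun m => π (f m)) j) := by
          intro j hj hcon
          have := (psat_stutter M φ π (fun t => f (j + t)) (hs.shift j) (hu.shift hs j)).mp hcon
          simp only [Nat.add_zero] at this
          have hfj : f 0 ≤ f j := hs.mono (Nat.zero_le j)
          have hfjlt : f j < f 0 + i := by have := hmlt j hj; omega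
          have h1' := hp (f j - f 0) (by omega)
          rw [shiftPath_shiftPath] at h1'
          have heq : f 0 + (f j - f 0) = f j := by omega
          rw [heq] at h1'
          exact h1' this
        have := (psat_stutter M ψ π (fun t => f (m + t)) (hs.shift m) (hu.shift hs m)).mp (H m hP)
        simp only [Nat.add_zero] at this
        rw [shiftPath_shiftPath, show f 0 + i = f m by omega]
        exact this
      · intro H m hp
        have hfm : f 0 ≤ f m := hs.mono (Nat.zero_le m)
        have hq : ∀ j' < f m - f 0, ¬ psat M φ (shiftPath (shiftPath π (f 0)) j') := by
          intro j' hj' hcon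
          rw [shiftPath_shiftPath] at hcon
          obtain ⟨j, hje, hjlt⟩ := hs.hit hu (Nat.le_add_right (f 0) j')
          have hjm : j < m := by
            by_contra hc
            have : f m ≤ f j := hs.mono (by omega)
            omega
          apply hp j hjm
          have := (psat_stutter M φ π (fun t => f (j + t)) (hs.shift j) (hu.shift hs j)).mpr
          simp only [Nat.add_zero] at this
          apply this
          rwa [hje]
        have := H (f m - f 0) hq
        rw [shiftPath_shiftPath, show f 0 + (f m - f 0) = f m by omega] at this
        have h2 := (psat_stutter M ψ π (fun t => f (m + t)) (hs.shift m) (hu.shift hs m)).mpr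
        simp only [Nat.add_zero] at h2
        exact h2 this

def Model.reindex {AP A B : Type} (M : Model AP B) (ι : A → B) : Model AP A where
  G := M.G
  R := M.R
  init := M.init
  eqv := fun i => M.eqv (ι i)
  val := fun g p i => M.val g p (ι i)

mutual
theorem ssat_reindex {AP A B : Type} (M : Model AP B) (ι : A → B) :
    ∀ (φ : SForm AP A) (g : M.G),
      ssat (M.reindex ι) φ g ↔ ssat M (renameS ι φ) g
  | .atom p i, g => Iff.rfl
  | .natom p i, g => Iff.rfl
  | .sand φ ψ, g => by
      simp only [ssat, renameS]
      exact and_congr (ssat_reindex M ι φ g) (ssat_reindex M ι ψ g)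
  | .sor φ ψ, g => by
      simp only [ssat, renameS]
      exact or_congr (ssat_reindex M ι φ g) (ssat_reindex M ι ψ g)
  | .know i φ, g => by
      simp only [ssat, renameS]
      exact forall_congr' fun g' => imp_congr Iff.rfl (ssat_reindex M ι φ g')
  | .aall φ, g => by
      simp only [ssat, renameS]
      exact forall_congr' fun π => imp_congr Iff.rfl (imp_congr Iff.rfl (psat_reindex M ι φ π))

theorem psat_reindex {AP A B : Type} (M : Model AP B) (ι : A → B) :
    ∀ (φ : PForm AP A) (π : ℕ → M.G),
      psat (M.reindex ι) φ π ↔ psat M (renameP ι φ) π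
  | .ofState φ, π => by
      simp only [psat, renameP]
      exact ssat_reindex M ι φ (π 0)
  | .pand φ ψ, π => by
      simp only [psat, renameP]
      exact and_congr (psat_reindex M ι φ π) (psat_reindex M ι ψ π)
  | .por φ ψ, π => by
      simp only [psat, renameP]
      exact or_congr (psat_reindex M ι φ π) (psat_reindex M ι ψ π)
  | .puntil φ ψ, π => by
      simp only [psat, renameP]
      exact exists_congr fun i => and_congr (psat_reindex M ι ψ (shiftPath π i))
        (forall_congr' fun j => forall_congr' fun _ => psat_reindex M ι φ (shiftPath π j))
  | .prelease φ ψ, π => by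
      simp only [psat, renameP]
      exact forall_congr' fun i => imp_congr
        (forall_congr' fun j => forall_congr' fun _ => not_congr (psat_reindex M ι φ (shiftPath π j)))
        (psat_reindex M ι ψ (shiftPath π i))
end

mutual
theorem sform_elim {AP : Type} : SForm AP (Fin 0) → False
  | .atom _ i => i.elim0
  | .natom _ i => i.elim0
  | .sand φ _ => sform_elim φ
  | .sor φ _ => sform_elim φ
  | .know i _ => i.elim0
  | .aall φ => pform_elim φ

theorem pform_elim {AP : Type} : PForm AP (Fin 0) → False
  | .ofState φ => sform_elim φ
  | .pand φ _ => pform_elim φ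
  | .por φ _ => pform_elim φ
  | .puntil φ _ => pform_elim φ
  | .prelease φ _ => pform_elim φ
end

-- abstract preservation of universal formulas along a (stuttering) simulation
mutual
theorem spres {AP A : Type} {M N : Model AP A} {S : M.G → N.G → Prop}
    (hVal : ∀ gM gN, S gM gN → ∀ p i, (N.val gN p i ↔ M.val gM p i))
    (hKnow : ∀ gM gN, S gM gN → ∀ i gM', M.eqv i gM gM' →
        ∃ gN', N.eqv i gN gN' ∧ S gM' gN')
    (hPath : ∀ gM gN, S gM gN → ∀ π, M.ValidPath π → π 0 = gM →
        ∃ (ρ : ℕ → N.G) (f : ℕ → ℕ), N.ValidPath ρ ∧ ρ 0 = gN ∧ f 0 = 0 ∧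
          StepF f ∧ UnbF f ∧ ∀ m, S (π (f m)) (ρ m)) :
    ∀ (φ : SForm AP A) (gM : M.G) (gN : N.G), S gM gN → ssat N φ gN → ssat M φ gM
  | .atom p i, gM, gN, hS, hsat => by
      simp only [ssat] at *
      exact (hVal gM gN hS p i).mp hsat
  | .natom p i, gM, gN, hS, hsat => by
      simp only [ssat] at *
      exact fun hc => hsat ((hVal gM gN hS p i).mpr hc)
  | .sand φ ψ, gM, gN, hS, hsat => by
      simp only [ssat] at *
      exact ⟨spres hVal hKnow hPath φ gM gN hS hsat.1, spres hVal hKnow hPath ψ gM gN hS hsat.2⟩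
  | .sor φ ψ, gM, gN, hS, hsat => by
      simp only [ssat] at *
      exact hsat.imp (spres hVal hKnow hPath φ gM gN hS) (spres hVal hKnow hPath ψ gM gN hS)
  | .know i φ, gM, gN, hS, hsat => by
      simp only [ssat] at *
      intro gM' he
      obtain ⟨gN', he', hS'⟩ := hKnow gM gN hS i gM' he
      exact spres hVal hKnow hPath φ gM' gN' hS' (hsat gN' he')
  | .aall φ, gM, gN, hS, hsat => by
      simp only [ssat] at *
      intro π hπ h0
      obtain ⟨ρ, f, hρ, hρ0, hf0, hstep, hub, hSm⟩ := hPath gM gN hS π hπ h0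
      have hN : psat N φ ρ := hsat ρ hρ hρ0
      have h1 : psat M φ (fun m => π (f m)) :=
        ppres hVal hKnow hPath φ (fun m => π (f m)) ρ (fun m => hSm m) hN
      have h2 := (psat_stutter M φ π f hstep hub).mp h1
      rwa [hf0, shiftPath_zero] at h2

theorem ppres {AP A : Type} {M N : Model AP A} {S : M.G → N.G → Prop}
    (hVal : ∀ gM gN, S gM gN → ∀ p i, (N.val gN p i ↔ M.val gM p i))
    (hKnow : ∀ gM gN, S gM gN → ∀ i gM', M.eqv i gM gM' →
        ∃ gN', N.eqv i gN gN' ∧ S gM' gN')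
    (hPath : ∀ gM gN, S gM gN → ∀ π, M.ValidPath π → π 0 = gM →
        ∃ (ρ : ℕ → N.G) (f : ℕ → ℕ), N.ValidPath ρ ∧ ρ 0 = gN ∧ f 0 = 0 ∧
          StepF f ∧ UnbF f ∧ ∀ m, S (π (f m)) (ρ m)) :
    ∀ (φ : PForm AP A) (π : ℕ → M.G) (ρ : ℕ → N.G),
      (∀ m, S (π m) (ρ m)) → psat N φ ρ → psat M φ π
  | .ofState φ, π, ρ, hS, hsat => by
      simp only [psat] at *
      exact spres hVal hKnow hPath φ (π 0) (ρ 0) (hS 0) hsat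
  | .pand φ ψ, π, ρ, hS, hsat => by
      simp only [psat] at *
      exact ⟨ppres hVal hKnow hPath φ π ρ hS hsat.1, ppres hVal hKnow hPath ψ π ρ hS hsat.2⟩
  | .por φ ψ, π, ρ, hS, hsat => by
      simp only [psat] at *
      exact hsat.imp (ppres hVal hKnow hPath φ π ρ hS) (ppres hVal hKnow hPath ψ π ρ hS)
  | .puntil φ ψ, π, ρ, hS, hsat => by
      simp only [psat] at *
      obtain ⟨i, h2, h1⟩ := hsat
      refine ⟨i, ppres hVal hKnow hPath ψ _ _ (fun m => hS (i + m)) h2, fun j hj =>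
        ppres hVal hKnow hPath φ _ _ (fun m => hS (j + m)) (h1 j hj)⟩
  | .prelease φ ψ, π, ρ, hS, hsat => by
      simp only [psat] at *
      intro i hp
      refine ppres hVal hKnow hPath ψ _ _ (fun m => hS (i + m)) (hsat i ?_)
      intro j hj hc
      exact hp j hj (ppres hVal hKnow hPath φ _ _ (fun m => hS (j + m)) hc)
end

-- ======== PIIS-specific machinery ========
section PIIS
variable {AP : Type} {T : Template AP} {k n : ℕ}

def projG (hkn : k ≤ n) (g : GState T n) : GState T k := fun i => g (Fin.castLE hkn i)

theorem gtrans_proj (hkn : k ≤ n) {a : CAct T n} {g g' : GState T n}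
    (H : GTrans T n a g g') : ∃ a', GTrans T k a' (projG hkn g) (projG hkn g') := by
  cases a with
  | sync s =>
      exact ⟨.sync s, fun i => ⟨(H (Fin.castLE hkn i)).1, (H (Fin.castLE hkn i)).2⟩⟩
  | async b i =>
      by_cases hi : (i : ℕ) < k
      · refine ⟨.async b ⟨i, hi⟩, ?_, ?_, ?_⟩
        · have : Fin.castLE hkn ⟨(i:ℕ), hi⟩ = i := by ext; rfl
          simpa [projG, this] using H.1
        · have : Fin.castLE hkn ⟨(i:ℕ), hi⟩ = i := by ext; rfl
          simpa [projG, this] using H.2.1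
        · intro j hj
          exact H.2.2 (Fin.castLE hkn j) (by
            intro hc
            apply hj; ext
            simpa using congrArg Fin.val hc)
      · refine ⟨.eps, funext fun j => H.2.2 (Fin.castLE hkn j) ?_⟩
        intro hc
        apply hi
        have := congrArg Fin.val hc
        simp at this
        omega
  | eps =>
      exact ⟨.eps, by simp only [GTrans] at H ⊢; rw [H]⟩

theorem greach_proj (hkn : k ≤ n) {g : GState T n} (H : GReach T n g) :
    GReach T k (projG hkn g) := by
  induction H with
  | refl => exact Relation.ReflTransGen.refl
  | tail _ hstep ih =>
      obtain ⟨a, ha⟩ := hstep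
      exact ih.tail (gtrans_proj hkn ha)

theorem reach_segment {m : ℕ} {τ : ℕ → GState T n}
    (hτ : ∀ j, ∃ a, GTrans T n a (τ j) (τ (j+1))) :
    ∀ d, Relation.ReflTransGen (fun x y => ∃ a, GTrans T n a x y) (τ m) (τ (m + d))
  | 0 => Relation.ReflTransGen.refl
  | d+1 => (reach_segment hτ d).tail (hτ (m + d))

def OffT (T : Template AP) (u v : T.L) : Prop :=
  u = v ∨ ∃ b, T.protA u b ∧ T.tA u b = v

def extG (hkn : k ≤ n) (hk : 0 < k) (h' : GState T k) : GState T n :=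
  fun j => if hj : (j : ℕ) < k then h' ⟨j, hj⟩ else h' ⟨0, hk⟩

end PIIS

-- arithmetic helpers for division with remainder stepping
theorem divmod_step {L m : ℕ} (hL : 0 < L) (h : m % L + 1 < L) :
    (m+1) / L = m / L ∧ (m+1) % L = m % L + 1 := by
  have hm := Nat.div_add_mod m L
  have h1 : m + 1 = L * (m / L) + (m % L + 1) := by omega
  rw [h1, Nat.mul_add_div hL, Nat.mul_add_mod]
  refine ⟨by rw [Nat.div_eq_of_lt h]; omega, by rw [Nat.mod_eq_of_lt h]⟩

theorem divmod_wrap {L m : ℕ} (hL : 0 < L) (h : m % L + 1 = L) :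
    (m+1) / L = m / L + 1 ∧ (m+1) % L = 0 := by
  have hm := Nat.div_add_mod m L
  have h1 : m + 1 = L * (m / L + 1) := by ring_nf; omega
  rw [h1, Nat.mul_div_cancel_left _ hL, Nat.mul_mod_right]
  exact ⟨rfl, rfl⟩

section Lift
variable {AP : Type} {T : Template AP} {k n : ℕ}

def liftEV (hk : 0 < k) (σ : ℕ → GState T k) (act : ℕ → CAct T k) : ℕ → T.L
  | 0 => T.init
  | t+1 => match act t with
    | .sync _ => σ (t+1) ⟨0, hk⟩
    | _ => σ t ⟨0, hk⟩

def liftBD (hk : 0 < k) (σ : ℕ → GState T k) (act : ℕ → CAct T k)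
    (g : GState T n) : ℕ → GState T n
  | 0 => g
  | t+1 => fun j => if hj : (j : ℕ) < k then σ (t+1) ⟨j, hj⟩ else liftEV hk σ act (t+1)

def liftCU (hk : 0 < k) (σ : ℕ → GState T k) (act : ℕ → CAct T k)
    (g : GState T n) (t r : ℕ) : GState T n :=
  fun j => if k ≤ (j : ℕ) ∧ (j : ℕ) < k + r then σ t ⟨0, hk⟩
           else liftBD hk σ act g t j

variable (hkn : k ≤ n) (hk : 0 < k) {σ : ℕ → GState T k} {act : ℕ → CAct T k}
  {g : GState T n}
  (hact : ∀ t, GTrans T k (act t) (σ t) (σ (t+1)))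
  (hproj : ∀ i : Fin k, g (Fin.castLE hkn i) = σ 0 i)
  (hoff : ∀ j : Fin n, k ≤ (j : ℕ) → OffT T (g j) (σ 0 ⟨0, hk⟩))

include hkn hproj in
theorem liftBD_lt : ∀ (t : ℕ) (j : Fin n) (hj : (j : ℕ) < k),
    liftBD hk σ act g t j = σ t ⟨j, hj⟩
  | 0, j, hj => by
      have h1 : Fin.castLE hkn ⟨(j : ℕ), hj⟩ = j := by ext; rfl
      have := hproj ⟨(j : ℕ), hj⟩
      rw [h1] at this
      simpa [liftBD] using this
  | t+1, j, hj => by simp [liftBD, hj]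

include hact hoff in
theorem liftBD_off : ∀ (t : ℕ) (j : Fin n), k ≤ (j : ℕ) →
    OffT T (liftBD hk σ act g t j) (σ t ⟨0, hk⟩)
  | 0, j, hj => hoff j hj
  | t+1, j, hj => by
      have hev : liftBD hk σ act g (t+1) j = liftEV hk σ act (t+1) := by
        simp [liftBD, Nat.not_lt.mpr hj]
      rw [hev]
      rcases hA : act t with s | ⟨b, i⟩ | _ <;> have hs := hact t <;> rw [hA] at hs
      · simp only [liftEV, hA]
        exact Or.inl rfl
      · simp only [liftEV, hA]
        by_cases hi : i = ⟨0, hk⟩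
        · subst hi
          exact Or.inr ⟨b, hs.1, (hs.2.1).symm⟩
        · exact Or.inl (hs.2.2 ⟨0, hk⟩ (fun hc => hi hc.symm)).symm
      · simp only [liftEV, hA]
        simp only [GTrans] at hs
        rw [hs]
        exact Or.inl rfl
end Lift

section Lift2
variable {AP : Type} {T : Template AP} {k n : ℕ}
variable (hkn : k ≤ n) (hk : 0 < k) {σ : ℕ → GState T k} {act : ℕ → CAct T k}
  {g : GState T n}
  (hact : ∀ t, GTrans T k (act t) (σ t) (σ (t+1)))
  (hproj : ∀ i : Fin k, g (Fin.castLE hkn i) = σ 0 i)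
  (hoff : ∀ j : Fin n, k ≤ (j : ℕ) → OffT T (g j) (σ 0 ⟨0, hk⟩))

theorem liftCU_zero : liftCU hk σ act g t 0 = liftBD hk σ act g t := by
  funext j
  simp only [liftCU]
  rw [if_neg (by omega)]

include hkn hproj in
theorem liftCU_lt (t r : ℕ) (j : Fin n) (hj : (j : ℕ) < k) :
    liftCU hk σ act g t r j = σ t ⟨j, hj⟩ := by
  simp only [liftCU]
  rw [if_neg (by omega), liftBD_lt hkn hk hproj]

include hkn hact hproj hoff in
theorem liftCU_off (t r : ℕ) (j : Fin n) (hj : k ≤ (j : ℕ)) :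
    OffT T (liftCU hk σ act g t r j) (σ t ⟨0, hk⟩) := by
  simp only [liftCU]
  by_cases hc : k ≤ (j : ℕ) ∧ (j : ℕ) < k + r
  · rw [if_pos hc]; exact Or.inl rfl
  · rw [if_neg hc]; exact liftBD_off hk hact hoff t j hj

include hkn hact hproj hoff in
theorem step_cu (t r : ℕ) (hr : r < n - k) :
    ∃ a, GTrans T n a (liftCU hk σ act g t r) (liftCU hk σ act g t (r+1)) := by
  have hkr : k + r < n := by omega
  set j0 : Fin n := ⟨k + r, hkr⟩ with hj0
  have hj0v : (j0 : ℕ) = k + r := rfl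
  have hcud : liftCU hk σ act g t r j0 = liftBD hk σ act g t j0 := by
    simp only [liftCU]; rw [if_neg (by omega)]
  rcases liftBD_off hk hact hoff t j0 (by omega) with heq | ⟨b, hb1, hb2⟩
  · refine ⟨.eps, ?_⟩
    show liftCU hk σ act g t (r+1) = liftCU hk σ act g t r
    funext j
    by_cases hje : (j : ℕ) = k + r
    · have hjj : j = j0 := Fin.ext (by omega)
      simp only [liftCU]
      rw [if_pos (by omega), if_neg (by omega), hjj, heq]
    · simp only [liftCU]
      have hiff : (k ≤ (j:ℕ) ∧ (j:ℕ) < k + (r+1)) ↔ (k ≤ (j:ℕ) ∧ (j:ℕ) < k + r) := by omega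
      rw [if_congr hiff rfl rfl]
  · refine ⟨.async b j0, ?_, ?_, ?_⟩
    · rw [hcud]; exact hb1
    · show liftCU hk σ act g t (r+1) j0 = _
      simp only [liftCU]
      rw [if_pos (by omega), if_neg (by omega)]
      exact hb2.symm
    · intro j hj
      have hje : (j : ℕ) ≠ k + r := fun hc => hj (Fin.ext (by omega))
      simp only [liftCU]
      have hiff : (k ≤ (j:ℕ) ∧ (j:ℕ) < k + (r+1)) ↔ (k ≤ (j:ℕ) ∧ (j:ℕ) < k + r) := by omega
      rw [if_congr hiff rfl rfl]

include hkn hact hproj hoff in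
theorem step_bd (t : ℕ) :
    ∃ a, GTrans T n a (liftCU hk σ act g t (n - k)) (liftBD hk σ act g (t+1)) := by
  have hcu_lt : ∀ (j : Fin n) (hj : (j : ℕ) < k),
      liftCU hk σ act g t (n-k) j = σ t ⟨j, hj⟩ := fun j hj => liftCU_lt hkn hk hproj t _ j hj
  have hcu_ge : ∀ (j : Fin n), k ≤ (j : ℕ) →
      liftCU hk σ act g t (n-k) j = σ t ⟨0, hk⟩ := by
    intro j hj
    simp only [liftCU]
    rw [if_pos ⟨hj, by omega⟩]
  rcases hA : act t with s | ⟨b, i⟩ | _ <;> have hs := hact t <;> rw [hA] at hs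
  · refine ⟨.sync s, fun j => ?_⟩
    by_cases hj : (j : ℕ) < k
    · rw [hcu_lt j hj]
      refine ⟨(hs ⟨j, hj⟩).1, ?_⟩
      show liftBD hk σ act g (t+1) j = _
      simp only [liftBD]
      rw [dif_pos hj]
      exact (hs ⟨j, hj⟩).2
    · rw [hcu_ge j (by omega)]
      refine ⟨(hs ⟨0, hk⟩).1, ?_⟩
      show liftBD hk σ act g (t+1) j = _
      simp only [liftBD]
      rw [dif_neg hj]
      simp only [liftEV, hA]
      exact (hs ⟨0, hk⟩).2
  · have hilt : ((Fin.castLE hkn i : Fin n) : ℕ) < k := i.isLt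
    have hieq : (⟨((Fin.castLE hkn i : Fin n) : ℕ), hilt⟩ : Fin k) = i := by ext; rfl
    refine ⟨.async b (Fin.castLE hkn i), ?_, ?_, ?_⟩
    · rw [hcu_lt _ hilt, hieq]; exact hs.1
    · show liftBD hk σ act g (t+1) (Fin.castLE hkn i) = _
      simp only [liftBD]
      rw [dif_pos hilt, hcu_lt _ hilt, hieq]
      exact hs.2.1
    · intro j hj
      by_cases hjk : (j : ℕ) < k
      · show liftBD hk σ act g (t+1) j = _
        simp only [liftBD]
        rw [dif_pos hjk, hcu_lt j hjk]
        refine hs.2.2 ⟨j, hjk⟩ ?_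
        intro hc; apply hj; ext
        have := congrArg Fin.val hc; simpa using this
      · show liftBD hk σ act g (t+1) j = _
        simp only [liftBD]
        rw [dif_neg hjk, hcu_ge j (by omega)]
        simp only [liftEV, hA]
  · refine ⟨.eps, ?_⟩
    show liftBD hk σ act g (t+1) = liftCU hk σ act g t (n-k)
    simp only [GTrans] at hs
    funext j
    by_cases hj : (j : ℕ) < k
    · simp only [liftBD]
      rw [dif_pos hj, hcu_lt j hj, hs]
    · simp only [liftBD]
      rw [dif_neg hj, hcu_ge j (by omega)]
      simp only [liftEV, hA, hs]
end Lift2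

section LiftMain
variable {AP : Type} {T : Template AP} {k n : ℕ}

theorem lift_path (hkn : k ≤ n) (hk : 0 < k) (σ : ℕ → GState T k)
    (hσ : ∀ t, ∃ a, GTrans T k a (σ t) (σ (t+1))) (g : GState T n)
    (hproj : ∀ i : Fin k, g (Fin.castLE hkn i) = σ 0 i)
    (hoff : ∀ j : Fin n, k ≤ (j : ℕ) → OffT T (g j) (σ 0 ⟨0, hk⟩)) :
    ∃ τ : ℕ → GState T n,
      (∀ m, ∃ a, GTrans T n a (τ m) (τ (m+1))) ∧ τ 0 = g ∧
      (∀ m (i : Fin k), τ m (Fin.castLE hkn i) = σ (m / (n-k+1)) i) ∧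
      (∀ m (j : Fin n), k ≤ (j : ℕ) → OffT T (τ m j) (σ (m / (n-k+1)) ⟨0, hk⟩)) ∧
      (∀ t, τ ((n-k+1) * t + (n-k)) = extG hkn hk (σ t)) := by
  set L := n - k + 1 with hLdef
  have hL : 0 < L := Nat.succ_pos _
  set act : ℕ → CAct T k := fun t => (hσ t).choose with hactdef
  have hact : ∀ t, GTrans T k (act t) (σ t) (σ (t+1)) := fun t => (hσ t).choose_spec
  refine ⟨fun m => liftCU hk σ act g (m / L) (m % L), ?_, ?_, ?_, ?_, ?_⟩
  · intro m
    show ∃ a, GTrans T n a (liftCU hk σ act g (m / L) (m % L))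
      (liftCU hk σ act g ((m+1) / L) ((m+1) % L))
    have hmod : m % L < L := Nat.mod_lt _ hL
    by_cases hr : m % L + 1 < L
    · obtain ⟨hd, hm⟩ := divmod_step hL hr
      rw [hd, hm]
      exact step_cu hkn hk hact hproj hoff (m / L) (m % L) (by omega)
    · have hr' : m % L + 1 = L := by omega
      obtain ⟨hd, hm⟩ := divmod_wrap hL hr'
      rw [hd, hm, liftCU_zero]
      have hC : m % L = n - k := by omega
      rw [hC]
      exact step_bd hkn hk hact hproj hoff (m / L)
  · show liftCU hk σ act g (0 / L) (0 % L) = g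
    rw [Nat.zero_div, Nat.zero_mod, liftCU_zero]
    rfl
  · intro m i
    show liftCU hk σ act g (m / L) (m % L) (Fin.castLE hkn i) = σ (m / (n-k+1)) i
    have hi : ((Fin.castLE hkn i : Fin n) : ℕ) < k := i.isLt
    rw [liftCU_lt hkn hk hproj _ _ _ hi]
    congr 1
  · intro m j hj
    exact liftCU_off hkn hk hact hproj hoff (m / L) (m % L) j hj
  · intro t
    show liftCU hk σ act g (((n-k+1) * t + (n-k)) / L) (((n-k+1) * t + (n-k)) % L) = extG hkn hk (σ t)
    have hC : n - k < L := by omega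
    have hd : (L * t + (n - k)) / L = t := by
      rw [Nat.mul_add_div hL, Nat.div_eq_of_lt hC]
      omega
    have hm : (L * t + (n - k)) % L = n - k := by
      rw [Nat.mul_add_mod, Nat.mod_eq_of_lt hC]
    rw [hd, hm]
    funext j
    by_cases hjk : (j : ℕ) < k
    · rw [liftCU_lt hkn hk hproj _ _ _ hjk]
      simp [extG, hjk]
    · simp only [liftCU]
      rw [if_pos ⟨by omega, by omega⟩]
      simp [extG, hjk]

theorem extG_reach (hkn : k ≤ n) (hk : 0 < k) {c : GState T k} (H : GReach T k c) :
    GReach T n (extG hkn hk c) := by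
  induction H with
  | refl =>
      have : extG hkn hk (GInit T k) = GInit T n := by
        funext j; unfold extG GInit; split <;> rfl
      rw [this]
      exact Relation.ReflTransGen.refl
  | @tail b c hbc hstep ih =>
      obtain ⟨a, ha⟩ := hstep
      set σ : ℕ → GState T k := fun t => if t = 0 then b else c with hσdef
      have hσ : ∀ t, ∃ a', GTrans T k a' (σ t) (σ (t+1)) := by
        intro t
        cases t with
        | zero => exact ⟨a, by simpa [hσdef] using ha⟩
        | succ s => exact ⟨.eps, by simp [hσdef, GTrans]⟩
      have hproj : ∀ i : Fin k, extG hkn hk b (Fin.castLE hkn i) = σ 0 i := by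
        intro i
        simp only [hσdef, if_pos rfl]
        have hi : ((Fin.castLE hkn i : Fin n) : ℕ) < k := i.isLt
        simp only [extG, dif_pos hi]
        congr 1
      have hoff : ∀ j : Fin n, k ≤ (j : ℕ) → OffT T (extG hkn hk b j) (σ 0 ⟨0, hk⟩) := by
        intro j hj
        simp only [hσdef, if_pos rfl, extG, dif_neg (by omega : ¬ (j : ℕ) < k)]
        exact Or.inl rfl
      obtain ⟨τ, hvalid, hτ0, _, _, hbound⟩ := lift_path hkn hk σ hσ (extG hkn hk b) hproj hoff
      have h1 : τ ((n-k+1) * 1 + (n-k)) = extG hkn hk c := by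
        rw [hbound 1]
        congr 1
      have h2 := reach_segment hvalid ((n-k+1) * 1 + (n-k)) (m := 0)
      rw [Nat.zero_add, hτ0, h1] at h2
      exact ih.trans h2
end LiftMain

/-- Cutoff lemma: for any ACTL*K_{-X}^{[k]} formula `φ` (indexed by the
agents `1,…,k` only) and any `n ≥ k`: `T(n) ⊨ φ` (with the indices of `φ`
included into `{1,…,n}` canonically) iff `T(k) ⊨ φ`. -/
theorem cutoff_lemma {AP : Type} (T : Template AP) (k n : ℕ) (h : k ≤ n)
    (φ : SForm AP (Fin k)) :
    PIISsat T n (renameS (Fin.castLE h) φ) ↔ PIISsat T k φ := by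
  rcases Nat.eq_zero_or_pos k with hk0 | hk
  · subst hk0
    exact (sform_elim φ).elim
  constructor
  · -- T(n) ⊨ rename φ  →  T(k) ⊨ φ
    intro H
    have H' : ssat ((PIISModel T n).reindex (Fin.castLE h)) φ (GInit T n) :=
      (ssat_reindex (PIISModel T n) (Fin.castLE h) φ (GInit T n)).mpr H
    exact spres
      (M := PIISModel T k) (N := (PIISModel T n).reindex (Fin.castLE h))
      (S := fun h' g => (∀ i : Fin k, g (Fin.castLE h i) = h' i) ∧
          ∀ j : Fin n, k ≤ (j : ℕ) → OffT T (g j) (h' ⟨0, hk⟩))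
      (by -- hVal
        rintro h' g ⟨hS1, _⟩ p i
        show T.lab (g (Fin.castLE h i)) p ↔ T.lab (h' i) p
        rw [hS1 i])
      (by -- hKnow
        rintro h' g ⟨hS1, hS2⟩ i h'' he
        obtain ⟨hre, heq⟩ := he
        refine ⟨extG h hk h'', ⟨extG_reach h hk hre, ?_⟩, ?_, ?_⟩
        · have hi : ((Fin.castLE h i : Fin n) : ℕ) < k := i.isLt
          show g (Fin.castLE h i) = extG h hk h'' (Fin.castLE h i)
          rw [hS1 i, heq]
          simp only [extG, dif_pos hi]
          congr 1
        · intro i'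
          have hi : ((Fin.castLE h i' : Fin n) : ℕ) < k := i'.isLt
          simp only [extG, dif_pos hi]
          congr 1
        · intro j hj
          simp only [extG, dif_neg (by omega : ¬ (j : ℕ) < k)]
          exact Or.inl rfl)
      (by -- hPath
        rintro h' g ⟨hS1, hS2⟩ σ hσv h0
        have hσ : ∀ t, ∃ a, GTrans T k a (σ t) (σ (t+1)) := hσv
        obtain ⟨τ, hvalid, hτ0, hp, ho, _⟩ := lift_path h hk σ hσ g
          (fun i => by rw [hS1 i, h0]) (fun j hj => by rw [h0]; exact hS2 j hj)
        exact ⟨τ, fun m => m / (n-k+1), hvalid, hτ0, Nat.zero_div _,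
          (by
            intro m
            have hL : 0 < n - k + 1 := Nat.succ_pos _
            by_cases hr : m % (n-k+1) + 1 < n - k + 1
            · exact Or.inl (divmod_step hL hr).1
            · have hmod : m % (n-k+1) < n-k+1 := Nat.mod_lt _ hL
              exact Or.inr (divmod_wrap hL (by omega)).1),
          (by
            intro c
            refine ⟨(n-k+1) * c, ?_⟩
            show c ≤ (n-k+1) * c / (n-k+1)
            rw [Nat.mul_div_cancel_left _ (Nat.succ_pos _)]),
          fun m => ⟨fun i => hp m i, fun j hj => ho m j hj⟩⟩)
      φ (GInit T k) (GInit T n)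
      ⟨fun i => rfl, fun j hj => Or.inl rfl⟩ H'
  · -- T(k) ⊨ φ  →  T(n) ⊨ rename φ
    intro H
    have H2 : ssat ((PIISModel T n).reindex (Fin.castLE h)) φ (GInit T n) :=
      spres
        (M := (PIISModel T n).reindex (Fin.castLE h)) (N := PIISModel T k)
        (S := fun g h' => ∀ i : Fin k, g (Fin.castLE h i) = h' i)
        (by -- hVal
          rintro g h' hS p i
          show T.lab (h' i) p ↔ T.lab (g (Fin.castLE h i)) p
          rw [hS i])
        (by -- hKnow
          rintro g h' hS i g' he
          obtain ⟨hre, heq⟩ := he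
          exact ⟨projG h g', ⟨greach_proj h hre, by rw [← hS i]; exact heq⟩,
            fun i' => rfl⟩)
        (by -- hPath
          rintro g h' hS π hπ h0
          refine ⟨fun m => projG h (π m), id, ?_, ?_, rfl,
            fun m => Or.inr rfl, fun c => ⟨c, le_rfl⟩, fun m i => rfl⟩
          · intro j
            obtain ⟨a, ha⟩ := hπ j
            exact gtrans_proj h ha
          · funext i
            show π 0 (Fin.castLE h i) = h' i
            rw [h0, hS i])
        φ (GInit T n) (GInit T k) (fun i => rfl) H
    exact (ssat_reindex (PIISModel T n) (Fin.castLE h) φ (GInit T n)).mp H2
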